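/- arXiv:math/0206232 — 3 statements merged into one kernel-verified Lean document; each statement's English description precedes it below -/
import Mathlib

section
/- For every Borel probability measure ρ on [0,1] and every θ ≥ 1, the limit z(ρ) = lim_{n→∞} Z_n(θ)^{1/n} exists and its value is independent of θ ∈ [1,∞). -/
open MeasureTheory ProbabilityTheory Filter Set
open scoped Classical ENNReal NNReal ENat

namespace OrgCrit

/-- Vertices of the rooted `b`-ary tree: finite sequences over `Fin b`,
with the root `[]`; the parent of a nonempty sequence is its `tail`
(the head being the deepest coordinate). -/
abbrev V (b : ℕ) := List (Fin b)

/-- One step of the avalanche dynamics. -/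
noncomputable def nextConf (b : ℕ) (f : V b → ℝ) : V b → ℝ := fun σ =>
  match σ with
  | [] => if 1 ≤ f [] then 0 else f []
  | _ :: l => if 1 ≤ f l then f σ + f l / (b : ℝ)
      else if 1 ≤ f σ then 0 else f σ

/-- The avalanche process `X^{(v)}(t)` started from configuration `x` with `v` added
at the root. -/
noncomputable def conf (b : ℕ) (x : V b → ℝ) (v : ℝ) : ℕ → V b → ℝ
  | 0 => fun σ => if σ = [] then x [] + v else x σ
  | t + 1 => nextConf b (conf b x v t)

/-- The avalanche set `A^{(v)}`. -/
def avalSet (b : ℕ) (x : V b → ℝ) (v : ℝ) : Set (V b) :=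
  {σ | ∃ t, conf b x v t σ = 0 ∧ ∃ s < t, conf b x v s σ ≠ 0}

/-- `x_* = sup {y ∈ [0,1] : ρ([y,1]) > 0}`. -/
noncomputable def xStar (ρ : Measure ℝ) : ℝ :=
  sSup {y : ℝ | y ∈ Set.Icc (0 : ℝ) 1 ∧ 0 < ρ (Set.Icc y 1)}

/-- `θ_b = b x_* / (b-1)`. -/
noncomputable def thetaB (b : ℕ) (ρ : Measure ℝ) : ℝ := (b : ℝ) * xStar ρ / ((b : ℝ) - 1)

/-- `Q_n^{(θ)}` built from the sequence `x` (`X_k = x k`, indexed from 1). -/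
noncomputable def Qseq (b : ℕ) (θ : ℝ) (x : ℕ → ℝ) : ℕ → ℝ
  | 0 => θ
  | n + 1 => x (n + 1) + Qseq b θ x n / (b : ℝ)

/-- `Z_n(θ) = P(Q_k^{(θ)} ≥ 1, k = 0,…,n)`. -/
noncomputable def Zfun (b : ℕ) (P : Measure (ℕ → ℝ)) (n : ℕ) (θ : ℝ) : ℝ :=
  (P {x | ∀ k ≤ n, 1 ≤ Qseq b θ x k}).toReal

/-- `Q_{n,k}^{(θ)} = Y_k + Y_{k+1}/b + … + Y_n/b^{n-k} + θ/b^{n-k+1}` (`Y_i = y i`). -/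
noncomputable def Qnk (b : ℕ) (θ : ℝ) (y : ℕ → ℝ) (n k : ℕ) : ℝ :=
  (∑ j ∈ Finset.range (n - k + 1), y (k + j) / (b : ℝ) ^ j) + θ / (b : ℝ) ^ (n - k + 1)

/-- The conditional law `P_n^{(θ)} = P( · | Q_{n,ℓ}^{(θ)} ≥ 1, ℓ = 2,…,n)`. -/
noncomputable def PnTheta (b : ℕ) (P : Measure (ℕ → ℝ)) (n : ℕ) (θ : ℝ) : Measure (ℕ → ℝ) :=
  ProbabilityTheory.cond P {y | ∀ ℓ, 2 ≤ ℓ → ℓ ≤ n → 1 ≤ Qnk b θ y n ℓ}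

/-- `Q_∞ = ∑_{k ≥ 1} Y_k b^{-(k-1)}`. -/
noncomputable def Qinf (b : ℕ) (y : ℕ → ℝ) : ℝ := ∑' k : ℕ, y (k + 1) / (b : ℝ) ^ k

/-- `Φ_b(y) = 1 - (1-y)^b`. -/
noncomputable def Phib (b : ℕ) (y : ℝ) : ℝ := 1 - (1 - y) ^ b

/-- `V_n`, the least addition at the root making the avalanche survive `n` steps. -/
noncomputable def Vmin (b : ℕ) (x : V b → ℝ) (n : ℕ) : ℝ :=
  sInf {v : ℝ | 0 < v ∧ ∀ t < n, conf b x v (t + 1) ≠ conf b x v t}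

/-- `Ψ_n(ϑ)`, the distribution function of `V_n` (with `Ψ_0 = 1_{ϑ ≥ 0}`). -/
noncomputable def Psi (b : ℕ) (P : Measure (V b → ℝ)) (n : ℕ) (ϑ : ℝ) : ℝ :=
  if n = 0 then (if 0 ≤ ϑ then 1 else 0) else (P {x | Vmin b x n ≤ ϑ}).toReal

/-- Bernoulli law on `Bool` with success probability `l`. -/
noncomputable def bern (l : ℝ) : Measure Bool :=
  ENNReal.ofReal l • Measure.dirac true + ENNReal.ofReal (1 - l) • Measure.dirac false

/-- The avalanche set `A^{(θ - X_∅)}` of the avalanche started with total value `θ`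
at the root, with the convention that it is empty whenever `θ < 1`. -/
noncomputable def avalSetTheta (b : ℕ) (x : V b → ℝ) (θ : ℝ) : Set (V b) :=
  if θ < 1 then ∅ else avalSet b x (θ - x [])

/-- `B^{(θ)}`: equal to `{∅}` if `A^{(θ-X_∅)} = ∅`, and to `{σ : m(σ) ∈ A^{(θ-X_∅)}}`
otherwise. -/
noncomputable def Bset (b : ℕ) (x : V b → ℝ) (θ : ℝ) : Set (V b) :=
  if avalSetTheta b x θ = ∅ then {([] : V b)}
  else {σ : V b | σ ≠ [] ∧ σ.tail ∈ avalSetTheta b x θ}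

/-- `B_∞(θ, λ) = P_{ρ,λ}(B^{(θ)} ∩ G ≠ ∅)`, where the first component of the coordinate
at `σ` is `X_σ` and the second one indicates whether `σ` is green. -/
noncomputable def Binfty (b : ℕ) (PJ : Measure (V b → ℝ × Bool)) (θ : ℝ) : ℝ :=
  (PJ {ω | ∃ σ ∈ Bset b (fun τ => (ω τ).1) θ, (ω σ).2 = true}).toReal

/-- The coordinates of `P` (a measure on `ℕ → ℝ`) are i.i.d. with law `ρ`. -/
def IsProjIID (ρ : Measure ℝ) (P : Measure (ℕ → ℝ)) : Prop :=
  IsProbabilityMeasure P ∧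
  iIndepFun (fun i (x : ℕ → ℝ) => x i) P ∧
  ∀ i : ℕ, Measure.map (fun x : ℕ → ℝ => x i) P = ρ

/-- The coordinates of `P` (a measure on configurations on the tree) are i.i.d. with
law `ρ`. -/
def IsTreeIID (b : ℕ) (ρ : Measure ℝ) (P : Measure (V b → ℝ)) : Prop :=
  IsProbabilityMeasure P ∧
  iIndepFun (fun σ (x : V b → ℝ) => x σ) P ∧
  ∀ σ : V b, Measure.map (fun x : V b → ℝ => x σ) P = ρ

/-- Joint law of the values and of the green sites: the coordinates are i.i.d., each with
law `ρ ⊗ Bernoulli(l)`. -/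
def IsTreeGreenIID (b : ℕ) (ρ : Measure ℝ) (l : ℝ) (P : Measure (V b → ℝ × Bool)) : Prop :=
  IsProbabilityMeasure P ∧
  iIndepFun
    (fun σ (ω : V b → ℝ × Bool) => ω σ) P ∧
  ∀ σ : V b, Measure.map (fun ω : V b → ℝ × Bool => ω σ) P = ρ.prod (bern l)

/-- `z` is the common value of `lim_n Z_n(θ)^{1/n}` over `θ ≥ 1`. -/
def IsZlim (b : ℕ) (P : Measure (ℕ → ℝ)) (z : ℝ) : Prop :=
  ∀ θ : ℝ, 1 ≤ θ →
    Tendsto (fun n : ℕ => Zfun b P n θ ^ (1 / (n : ℝ))) atTop (nhds z)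

/-- `ψ θ = lim_n Z_n(θ) z^{-n}` for all `θ ≥ 0`. -/
def IsPsiFun (b : ℕ) (P : Measure (ℕ → ℝ)) (z : ℝ) (ψ : ℝ → ℝ) : Prop :=
  ∀ θ : ℝ, 0 ≤ θ →
    Tendsto (fun n : ℕ => Zfun b P n θ / z ^ n) atTop (nhds (ψ θ))

/-- `Phat` is the limit of `P_n^{(θ)}` (tested on bounded measurable functions of
finitely many coordinates), independently of `θ ≥ 1`. -/
def IsLawQhat (b : ℕ) (P : Measure (ℕ → ℝ)) (Phat : Measure (ℕ → ℝ)) : Prop :=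
  IsProbabilityMeasure Phat ∧
  ∀ θ : ℝ, 1 ≤ θ → ∀ k : ℕ, ∀ f : (ℕ → ℝ) → ℝ, Measurable f →
    (∃ M : ℝ, ∀ y, |f y| ≤ M) →
    (∀ y y' : ℕ → ℝ, (∀ i, 1 ≤ i → i ≤ k → y i = y' i) → f y = f y') →
    Tendsto (fun n : ℕ => ∫ y, f y ∂(PnTheta b P n θ)) atTop (nhds (∫ y, f y ∂Phat))

/-- The class `M♭`: probability measures on `[0,1]`, absolutely continuous with a bounded
density w.r.t. Lebesgue measure, giving positive mass to `[1 - 1/b, 1]`. -/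
def MFlat (b : ℕ) (ρ : Measure ℝ) : Prop :=
  IsProbabilityMeasure ρ ∧ ρ ((Set.Icc (0 : ℝ) 1)ᶜ) = 0 ∧
  (∃ C : NNReal, ∀ s : Set ℝ, ρ s ≤ C * volume s) ∧
  0 < ρ (Set.Icc (1 - 1 / (b : ℝ)) 1)

/-- The defining property of `c_ρ`. -/
def IsCrho (b : ℕ) (ρ : Measure ℝ) (Phat : Measure (ℕ → ℝ)) (ψ : ℝ → ℝ) (c : ℝ) : Prop :=
  0 < c ∧
  1 / c ^ 2 = ((b : ℝ) - 1) / 2 *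
    ∫ y, (∫ x, ψ (x + Qinf b y / (b : ℝ)) ∂ρ) ^ 2
      ∂(ProbabilityTheory.cond Phat {y | 1 ≤ Qinf b y})

/-- `Q_σ^{(θ)}` on the tree: `Q_∅ = θ`, `Q_σ = X_σ + Q_{m(σ)}/b`. -/
noncomputable def treeQ (b : ℕ) (θ : ℝ) (x : V b → ℝ) : V b → ℝ
  | [] => θ
  | a :: l => x (a :: l) + treeQ b θ x l / (b : ℝ)


/-!
Let `θ_b = b x_* / (b - 1)`, the fixed point of `q ↦ x_* + q / b`; almost surely
`Q_n^{(θ)} ≤ θ_b + θ / b ^ n`. The sequence `Z_n(1)` is supermultiplicative, so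
`z = lim Z_n(1)^{1/n}` exists by Fekete's lemma, and `Z_n(θ) ≥ Z_n(1)` for `θ ≥ 1` is the lower
bound. By the Markov property, `Z_{N+M}(θ) ≤ Z_N(θ) Z_M(θ_b + θ / b ^ N)`; with the
right-continuity of `Z_M` in the starting point, the upper bound follows once `Z_M(θ_b) < c ^ M`
for some `M`, for every `c > z`. If `θ_b ≤ 1` this holds because `Z_M(θ_b) ≤ Z_M(1)`. If
`θ_b > 1`, one step from `θ_b` either needs `X_1 ≥ x_* - γ` (for a suitable `γ > 0`), of
probability at most `z`, or leaves the chain below `θ_b - γ`; survival from there costs only a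
constant times `z ^ n`, since a run of large values lifts a chain started at `1` above `θ_b - γ`.
Hence `Z_n(θ_b) = O(n z ^ n)`.
-/

open Topology

section Sequences

/-- Fekete's lemma, multiplicative form. -/
theorem exists_tendsto_rpow_of_supermultiplicative {u : ℕ → ℝ} (hu0 : ∀ n, 0 ≤ u n)
    (hu1 : ∀ n, u n ≤ 1) (hanti : Antitone u) (hmul : ∀ m n, u m * u n ≤ u (m + n)) :
    ∃ z, Tendsto (fun n : ℕ => u n ^ (1 / (n : ℝ))) atTop (𝓝 z) ∧ ∀ n, u n ≤ z ^ n := by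
  rcases (hu0 1).eq_or_lt with h1 | h1
  · have hzero : ∀ n, 1 ≤ n → u n = 0 := fun n hn => le_antisymm (h1 ▸ hanti hn) (hu0 n)
    refine ⟨0, tendsto_const_nhds.congr' ?_, fun n => ?_⟩
    · filter_upwards [eventually_ge_atTop 1] with n hn
      rw [hzero n hn, Real.zero_rpow (by positivity)]
    · rcases Nat.eq_zero_or_pos n with rfl | hn
      · simpa using hu1 0
      · simp [hzero n hn]
  have hpos : ∀ n, 0 < u n := fun n => by
    induction n with
    | zero => exact h1.trans_le (hanti zero_le_one)
    | succ n ih => exact (mul_pos ih h1).trans_le (hmul n 1)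
  set v : ℕ → ℝ := fun n => -Real.log (u n) with hv
  have hsub : Subadditive v := fun m n => by
    simp only [hv]
    rw [← neg_add, ← Real.log_mul (hpos m).ne' (hpos n).ne', neg_le_neg_iff]
    exact Real.log_le_log (mul_pos (hpos m) (hpos n)) (hmul m n)
  have hbdd : BddBelow (Set.range fun n => v n / n) := ⟨0, by
    rintro _ ⟨n, rfl⟩
    exact div_nonneg (neg_nonneg.2 (Real.log_nonpos (hu0 n) (hu1 n))) n.cast_nonneg⟩
  refine ⟨Real.exp (-hsub.lim), ?_, fun n => ?_⟩
  · refine ((Real.continuous_exp.tendsto _).comp (hsub.tendsto_lim hbdd).neg).congr fun n => ?_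
    simp [hv, Real.rpow_def_of_pos (hpos n), div_eq_mul_inv]
  · rcases Nat.eq_zero_or_pos n with rfl | hn
    · simpa using hu1 0
    have hlim := (le_div_iff₀ (by positivity : (0 : ℝ) < n)).1 (hsub.lim_le_div hbdd hn.ne')
    rw [← Real.exp_log (hpos n), ← Real.exp_nat_mul, Real.exp_le_exp]
    simp only [hv] at hlim
    linarith

lemma eventually_rpow_one_div_lt {u : ℕ → ℝ} {C c c' : ℝ} (hu : ∀ n, 0 ≤ u n) (hC : 0 < C)
    (hc : 0 ≤ c) (hcc' : c < c') (h : ∀ᶠ n in atTop, u n ≤ C * c ^ n) :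
    ∀ᶠ n : ℕ in atTop, u n ^ (1 / (n : ℝ)) < c' := by
  have hroot : Tendsto (fun n : ℕ => C ^ (1 / (n : ℝ)) * c) atTop (𝓝 c) := by
    have h0 := (Real.continuousAt_const_rpow hC.ne').tendsto.comp
      (tendsto_const_div_atTop_nhds_zero_nat 1)
    simpa using h0.mul_const c
  filter_upwards [h, hroot.eventually (gt_mem_nhds hcc'), eventually_ge_atTop 1]
    with n hn hlt hn1
  calc u n ^ (1 / (n : ℝ)) ≤ (C * c ^ n) ^ (1 / (n : ℝ)) := by gcongr; exact hu n
    _ = C ^ (1 / (n : ℝ)) * c := by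
      rw [Real.mul_rpow hC.le (by positivity), one_div,
        Real.pow_rpow_inv_natCast hc (by omega)]
    _ < c' := hlt

lemma eventually_lt_pow_of_le_mul_add {w : ℕ → ℝ} {z c K : ℝ} (hz : 0 < z) (hzc : z < c)
    (hw0 : w 0 ≤ 1) (hrec : ∀ n, w (n + 1) ≤ z * w n + K * z ^ n) :
    ∀ᶠ n : ℕ in atTop, w n < c ^ n := by
  have hgrowth : ∀ n : ℕ, w n ≤ (1 + K / z * n) * z ^ n := by
    intro n
    induction n with
    | zero => simpa using hw0
    | succ n ih =>
      calc w (n + 1) ≤ z * ((1 + K / z * n) * z ^ n) + K * z ^ n := by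
            nlinarith [hrec n]
        _ = (1 + K / z * (n + 1 : ℕ)) * z ^ (n + 1) := by
          field_simp
          push_cast
          ring
  have hc : 0 < c := hz.trans hzc
  have hr : z / c < 1 := (div_lt_one hc).2 hzc
  have hlim : Tendsto (fun n : ℕ => (1 + K / z * n) * (z / c) ^ n) atTop (𝓝 0) := by
    have := (tendsto_pow_atTop_nhds_zero_of_lt_one (by positivity) hr).add
      ((tendsto_self_mul_const_pow_of_lt_one (by positivity) hr).const_mul (K / z))
    simpa [add_mul, mul_assoc] using this
  filter_upwards [hlim.eventually (gt_mem_nhds one_pos)] with n hn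
  have hcn : 0 < c ^ n := pow_pos hc n
  calc w n ≤ (1 + K / z * n) * (z / c) ^ n * c ^ n := by
        rw [div_pow, mul_assoc, div_mul_cancel₀ _ hcn.ne']
        exact hgrowth n
    _ < 1 * c ^ n := by gcongr
    _ = c ^ n := one_mul _

end Sequences

section Pathwise

variable {b : ℕ}

def shift (n : ℕ) (x : ℕ → ℝ) : ℕ → ℝ := fun i => x (n + i)

lemma Qseq_add (θ : ℝ) (x : ℕ → ℝ) (n k : ℕ) :
    Qseq b θ x (n + k) = Qseq b (Qseq b θ x n) (shift n x) k := by
  induction k with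
  | zero => rfl
  | succ k ih =>
    show x (n + k + 1) + Qseq b θ x (n + k) / b = shift n x (k + 1) + _ / b
    rw [ih]
    rfl

lemma Qseq_sub_Qseq (θ θ' : ℝ) (x : ℕ → ℝ) (n : ℕ) :
    Qseq b θ' x n - Qseq b θ x n = (θ' - θ) / (b : ℝ) ^ n := by
  induction n with
  | zero => simp [Qseq]
  | succ n ih => rw [Qseq, Qseq, add_sub_add_left_eq_sub, ← sub_div, ih, pow_succ, div_div]

lemma Qseq_mono {θ θ' : ℝ} (h : θ ≤ θ') (x : ℕ → ℝ) (n : ℕ) :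
    Qseq b θ x n ≤ Qseq b θ' x n := by
  have : 0 ≤ (θ' - θ) / (b : ℝ) ^ n := div_nonneg (sub_nonneg.2 h) (by positivity)
  linarith [Qseq_sub_Qseq (b := b) θ θ' x n]

lemma continuous_Qseq (x : ℕ → ℝ) (n : ℕ) : Continuous fun θ => Qseq b θ x n := by
  induction n with
  | zero => exact continuous_id
  | succ n ih => exact continuous_const.add (ih.div_const _)

lemma Qseq_le_of_le {c T : ℝ} (hT : c + T / b = T) (θ : ℝ) {x : ℕ → ℝ} {n : ℕ}
    (hx : ∀ i ∈ Finset.Icc 1 n, x i ≤ c) : Qseq b θ x n ≤ T + (θ - T) / (b : ℝ) ^ n := by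
  induction n with
  | zero => simp [Qseq]
  | succ n ih =>
    have hn := ih fun i hi => hx i (Finset.Icc_subset_Icc_right n.le_succ hi)
    calc Qseq b θ x (n + 1) = x (n + 1) + Qseq b θ x n / b := rfl
      _ ≤ c + (T + (θ - T) / (b : ℝ) ^ n) / b := by
        gcongr
        exact hx (n + 1) (by simp)
      _ = T + (θ - T) / (b : ℝ) ^ (n + 1) := by rw [pow_succ, add_div, ← add_assoc, hT, div_div]

lemma le_Qseq_of_le {a T : ℝ} (hT : a + T / b = T) (θ : ℝ) {x : ℕ → ℝ} {n : ℕ}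
    (hx : ∀ i ∈ Finset.Icc 1 n, a ≤ x i) : T + (θ - T) / (b : ℝ) ^ n ≤ Qseq b θ x n := by
  induction n with
  | zero => simp [Qseq]
  | succ n ih =>
    have hn := ih fun i hi => hx i (Finset.Icc_subset_Icc_right n.le_succ hi)
    calc T + (θ - T) / (b : ℝ) ^ (n + 1) = a + (T + (θ - T) / (b : ℝ) ^ n) / b := by
          rw [pow_succ, add_div, ← add_assoc, hT, div_div]
      _ ≤ x (n + 1) + Qseq b θ x n / b := by
        gcongr
        exact hx (n + 1) (by simp)

def survivalSet (b : ℕ) (θ : ℝ) (n : ℕ) : Set (ℕ → ℝ) := {x | ∀ k ≤ n, 1 ≤ Qseq b θ x k}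

lemma mem_survivalSet_add {θ : ℝ} {x : ℕ → ℝ} {n m : ℕ} :
    x ∈ survivalSet b θ (n + m) ↔
      x ∈ survivalSet b θ n ∧ shift n x ∈ survivalSet b (Qseq b θ x n) m := by
  simp only [survivalSet, Set.mem_ofPred_eq, ← Qseq_add]
  refine ⟨fun h => ⟨fun k hk => h k (by omega), fun k hk => h (n + k) (by omega)⟩,
    fun ⟨h₁, h₂⟩ k hk => ?_⟩
  rcases le_or_gt k n with hkn | hnk
  · exact h₁ k hkn
  · simpa [Nat.add_sub_cancel' hnk.le] using h₂ (k - n) (by omega)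

lemma survivalSet_mono {θ θ' : ℝ} (h : θ ≤ θ') (n : ℕ) :
    survivalSet b θ n ⊆ survivalSet b θ' n :=
  fun x hx k hk => (hx k hk).trans (Qseq_mono h x k)

lemma survivalSet_anti (θ : ℝ) {n m : ℕ} (h : n ≤ m) : survivalSet b θ m ⊆ survivalSet b θ n :=
  fun _ hx k hk => hx k (hk.trans h)

lemma biInter_gt_survivalSet (T : ℝ) (n : ℕ) :
    ⋂ θ > T, survivalSet b θ n = survivalSet b T n := by
  refine Set.Subset.antisymm (fun x hx k hk => ?_) (Set.subset_iInter₂ fun θ hθ =>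
    survivalSet_mono hθ.le n)
  have hclosed : IsClosed {θ : ℝ | 1 ≤ Qseq b θ x k} :=
    isClosed_le continuous_const (continuous_Qseq x k)
  exact hclosed.closure_subset_iff.2 (fun θ hθ => Set.mem_iInter₂.1 hx θ hθ k hk)
    (closure_Ioi T ▸ Set.self_mem_Ici)

lemma measurable_Qseq {Ω : Type*} [MeasurableSpace Ω] {X : Ω → ℕ → ℝ} (θ : ℝ) {n : ℕ}
    (hX : ∀ i ∈ Finset.Icc 1 n, Measurable fun ω => X ω i) :
    Measurable fun ω => Qseq b θ (X ω) n := by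
  induction n with
  | zero => exact measurable_const
  | succ n ih =>
    exact (hX (n + 1) (by simp)).add
      ((ih fun i hi => hX i (Finset.Icc_subset_Icc_right n.le_succ hi)).div_const _)

lemma measurableSet_preimage_survivalSet {Ω : Type*} [mΩ : MeasurableSpace Ω]
    {X : Ω → ℕ → ℝ} (θ : ℝ) {n : ℕ} (hX : ∀ i ∈ Finset.Icc 1 n, Measurable fun ω => X ω i) :
    MeasurableSet (X ⁻¹' survivalSet b θ n) := by
  simp only [survivalSet, Set.ofPred_forall, Set.preimage_iInter]
  exact .iInter fun k => .iInter fun (hk : k ≤ n) => measurableSet_le measurable_const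
    (measurable_Qseq θ fun i hi => hX i (Finset.Icc_subset_Icc_right hk hi))

lemma measurableSet_survivalSet (θ : ℝ) (n : ℕ) : MeasurableSet (survivalSet b θ n) :=
  measurableSet_preimage_survivalSet (X := id) θ fun i _ => measurable_pi_apply i

end Pathwise

section XStar

variable {b : ℕ} {ρ : Measure ℝ}

lemma xStar_nonneg : 0 ≤ xStar ρ :=
  Real.sSup_nonneg fun _ hy => hy.1.1

lemma measure_Ici_eq_zero_of_xStar_lt (hsupp : ρ (Set.Icc (0 : ℝ) 1)ᶜ = 0) {y : ℝ}
    (hy : xStar ρ < y) : ρ (Set.Ici y) = 0 := by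
  have hIcc : ρ (Set.Icc y 1) = 0 := by
    by_contra h
    have hy1 : y ≤ 1 := by
      by_contra hy1
      exact h (by simp [Set.Icc_eq_empty (not_le.1 hy1).not_ge])
    have hmem : y ∈ {y : ℝ | y ∈ Set.Icc (0 : ℝ) 1 ∧ 0 < ρ (Set.Icc y 1)} :=
      ⟨⟨xStar_nonneg.trans hy.le, hy1⟩, pos_iff_ne_zero.2 h⟩
    exact (le_csSup ⟨1, fun _ hz => hz.1.2⟩ hmem).not_gt hy
  refine measure_mono_null (fun z hz => ?_) (measure_union_null hIcc hsupp)
  by_cases hz1 : z ≤ 1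
  · exact Or.inl ⟨hz, hz1⟩
  · exact Or.inr fun hz' => hz1 hz'.2

lemma measure_Ioi_xStar (hsupp : ρ (Set.Icc (0 : ℝ) 1)ᶜ = 0) : ρ (Set.Ioi (xStar ρ)) = 0 := by
  have hlim : Tendsto (fun n : ℕ => xStar ρ + 1 / ((n : ℝ) + 1)) atTop (𝓝 (xStar ρ)) := by
    simpa using tendsto_one_div_add_atTop_nhds_zero_nat.const_add (xStar ρ)
  rw [← iUnion_Ici_eq_Ioi_of_lt_of_tendsto (fun n => by simp; positivity) hlim]
  exact measure_iUnion_null fun n =>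
    measure_Ici_eq_zero_of_xStar_lt hsupp (lt_add_of_pos_right _ (by positivity))

lemma measure_Ici_sub_xStar_pos [IsProbabilityMeasure ρ] (hsupp : ρ (Set.Icc (0 : ℝ) 1)ᶜ = 0)
    {δ : ℝ} (hδ : 0 < δ) : 0 < ρ (Set.Ici (xStar ρ - δ)) := by
  have hzero : (0 : ℝ) ∈ {y : ℝ | y ∈ Set.Icc (0 : ℝ) 1 ∧ 0 < ρ (Set.Icc y 1)} :=
    ⟨⟨le_rfl, zero_le_one⟩, by simp [(prob_compl_eq_zero_iff measurableSet_Icc).1 hsupp]⟩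
  obtain ⟨y, hy, hlt⟩ := exists_lt_of_lt_csSup ⟨0, hzero⟩ (sub_lt_self (xStar ρ) hδ)
  exact hy.2.trans_le (measure_mono fun t ht => hlt.le.trans ht.1)

lemma xStar_add_thetaB_div (hb : 1 < b) : xStar ρ + thetaB b ρ / b = thetaB b ρ := by
  have : (1 : ℝ) < b := by exact_mod_cast hb
  have hb1 : (b : ℝ) - 1 ≠ 0 := by linarith
  rw [thetaB, div_div, eq_div_iff hb1]
  field_simp
  ring

lemma thetaB_nonneg (hb : 1 < b) : 0 ≤ thetaB b ρ := by
  have : (1 : ℝ) < b := by exact_mod_cast hb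
  exact div_nonneg (mul_nonneg (by positivity) xStar_nonneg) (by linarith)

end XStar

section Probability

variable {b : ℕ} {ρ : Measure ℝ} {P : Measure (ℕ → ℝ)}

abbrev coordSigma (s : Set ℕ) : MeasurableSpace (ℕ → ℝ) :=
  ⨆ i ∈ s, MeasurableSpace.comap (fun x : ℕ → ℝ => x i) inferInstance

lemma measurable_coord_coordSigma {s : Set ℕ} {i : ℕ} (hi : i ∈ s) :
    Measurable[coordSigma s] fun x : ℕ → ℝ => x i :=
  (comap_measurable _).mono
    (le_iSup₂ (f := fun j (_ : j ∈ s) =>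
      MeasurableSpace.comap (fun x : ℕ → ℝ => x j) inferInstance) i hi) le_rfl

lemma measurableSet_survivalSet_coordSigma (θ : ℝ) (n : ℕ) :
    MeasurableSet[coordSigma (Set.Iic n)] (survivalSet b θ n) :=
  measurableSet_preimage_survivalSet (mΩ := coordSigma _) (X := id) θ fun i hi =>
    measurable_coord_coordSigma (by simp at hi ⊢; omega)

lemma measurable_shift (n : ℕ) : Measurable (shift n) :=
  measurable_pi_lambda _ fun _ => measurable_pi_apply _

def box (a : ℝ) (s : ℕ) : Set (ℕ → ℝ) := Set.pi (Finset.Icc 1 s : Set ℕ) fun _ => Set.Ici a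

lemma measurableSet_box (a : ℝ) (s : ℕ) : MeasurableSet[coordSigma (Set.Iic s)] (box a s) := by
  rw [box, Set.pi_def]
  exact .biInter (Finset.Icc 1 s).countable_toSet fun i hi =>
    measurableSet_Ici.preimage (measurable_coord_coordSigma (by simp at hi ⊢; omega))

namespace IsProjIID

lemma indep_coordSigma (hP : IsProjIID ρ P) {s t : Set ℕ} (hst : Disjoint s t) :
    Indep (coordSigma s) (coordSigma t) P :=
  indep_iSup_of_disjoint (fun i => (measurable_pi_apply i).comap_le) hP.2.1 hst

lemma ae_le_xStar (hP : IsProjIID ρ P) (hsupp : ρ (Set.Icc (0 : ℝ) 1)ᶜ = 0) :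
    ∀ᵐ x ∂P, ∀ i, x i ≤ xStar ρ := by
  refine ae_all_iff.2 fun i => ae_of_ae_map (p := (· ≤ xStar ρ))
    (measurable_pi_apply (X := fun _ : ℕ => ℝ) i).aemeasurable ?_
  rw [hP.2.2 i, ae_iff]
  simpa [Set.Ioi] using measure_Ioi_xStar hsupp

lemma isProbabilityMeasure (hP : IsProjIID ρ P) : IsProbabilityMeasure ρ := by
  have := hP.1
  rw [← hP.2.2 0]
  exact Measure.isProbabilityMeasure_map (measurable_pi_apply 0).aemeasurable

lemma eq_infinitePi (hP : IsProjIID ρ P) : P = Measure.infinitePi fun _ : ℕ => ρ := by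
  have := hP.1
  simpa [hP.2.2] using hP.2.1.map_fun_eq_infinitePi_map fun i => measurable_pi_apply i

lemma measure_shift_preimage (hP : IsProjIID ρ P) (n : ℕ) {B : Set (ℕ → ℝ)}
    (hB : MeasurableSet B) : P (shift n ⁻¹' B) = P B := by
  have := hP.isProbabilityMeasure
  rw [← Measure.map_apply (measurable_shift n) hB, hP.eq_infinitePi]
  congr 1
  exact Measure.map_infinitePi_infinitePi_of_inj (add_right_injective n)

lemma measure_box (hP : IsProjIID ρ P) (a : ℝ) (s : ℕ) : P (box a s) = ρ (Set.Ici a) ^ s := by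
  have := hP.isProbabilityMeasure
  rw [hP.eq_infinitePi, box]
  convert Measure.infinitePi_pi (μ := fun _ : ℕ => ρ) fun _ _ => measurableSet_Ici using 1
  simp

/-- Markov property of the chain at time `n`. -/
lemma measure_inter_shift_preimage (hP : IsProjIID ρ P) {n : ℕ} {A : Set (ℕ → ℝ)}
    (hA : MeasurableSet[coordSigma (Set.Iic n)] A) (θ : ℝ) (m : ℕ) :
    P (A ∩ shift n ⁻¹' survivalSet b θ m) = P A * P (survivalSet b θ m) := by
  have hB : MeasurableSet[coordSigma (Set.Ioi n)] (shift n ⁻¹' survivalSet b θ m) :=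
    measurableSet_preimage_survivalSet (mΩ := coordSigma _) θ fun i hi =>
      measurable_coord_coordSigma (by simp at hi ⊢; omega)
  rw [(Indep_iff _ _ _).1 (hP.indep_coordSigma (Set.Iic_disjoint_Ioi le_rfl)) A _ hA hB,
    hP.measure_shift_preimage n (measurableSet_survivalSet θ m)]

end IsProjIID

end Probability

section Zfun

variable {b : ℕ} {P : Measure (ℕ → ℝ)}

lemma Zfun_eq (n : ℕ) (θ : ℝ) : Zfun b P n θ = (P (survivalSet b θ n)).toReal := rfl

lemma Zfun_nonneg (n : ℕ) (θ : ℝ) : 0 ≤ Zfun b P n θ := ENNReal.toReal_nonneg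

lemma Zfun_le_one [IsProbabilityMeasure P] (n : ℕ) (θ : ℝ) : Zfun b P n θ ≤ 1 :=
  ENNReal.toReal_le_of_le_ofReal zero_le_one (by simpa using prob_le_one)

lemma Zfun_anti [IsFiniteMeasure P] (θ : ℝ) {n m : ℕ} (h : n ≤ m) :
    Zfun b P m θ ≤ Zfun b P n θ :=
  ENNReal.toReal_mono (measure_ne_top _ _) (measure_mono (survivalSet_anti θ h))

lemma Zfun_mono [IsFiniteMeasure P] {θ θ' : ℝ} (h : θ ≤ θ') (n : ℕ) :
    Zfun b P n θ ≤ Zfun b P n θ' :=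
  ENNReal.toReal_mono (measure_ne_top _ _) (measure_mono (survivalSet_mono h n))

lemma Zfun_zero [IsProbabilityMeasure P] {θ : ℝ} (h : 1 ≤ θ) : Zfun b P 0 θ = 1 := by
  have : survivalSet b θ 0 = Set.univ := Set.eq_univ_of_forall fun x k hk => by
    rwa [Nat.le_zero.1 hk]
  simp [Zfun_eq, this]

lemma tendsto_Zfun_nhdsGT [IsFiniteMeasure P] (n : ℕ) (T : ℝ) :
    Tendsto (fun θ => Zfun b P n θ) (𝓝[>] T) (𝓝 (Zfun b P n T)) := by
  have h := tendsto_measure_biInter_gt (μ := P) (a := T)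
    (fun θ _ => (measurableSet_survivalSet (b := b) θ n).nullMeasurableSet)
    (fun θ θ' _ h => survivalSet_mono h n) ⟨T + 1, by simp, measure_ne_top _ _⟩
  rw [biInter_gt_survivalSet] at h
  exact (ENNReal.tendsto_toReal (measure_ne_top _ _)).comp h

end Zfun

namespace IsProjIID

variable {b : ℕ} {ρ : Measure ℝ} {P : Measure (ℕ → ℝ)}

lemma toReal_measure_mul_Zfun_le (hP : IsProjIID ρ P) {n m : ℕ} {θ θ' : ℝ}
    {A : Set (ℕ → ℝ)} (hA : MeasurableSet[coordSigma (Set.Iic n)] A)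
    (hAθ : ∀ x ∈ A, x ∈ survivalSet b θ n ∧ θ' ≤ Qseq b θ x n) :
    (P A).toReal * Zfun b P m θ' ≤ Zfun b P (n + m) θ := by
  have := hP.1
  have hsub : A ∩ shift n ⁻¹' survivalSet b θ' m ⊆ survivalSet b θ (n + m) :=
    fun x ⟨hxA, hx⟩ => mem_survivalSet_add.2
      ⟨(hAθ x hxA).1, survivalSet_mono (hAθ x hxA).2 m hx⟩
  rw [Zfun_eq, Zfun_eq, ← ENNReal.toReal_mul, ← hP.measure_inter_shift_preimage hA]
  exact ENNReal.toReal_mono (measure_ne_top _ _) (measure_mono hsub)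

lemma Zfun_mul_Zfun_one_le (hP : IsProjIID ρ P) (n m : ℕ) (θ : ℝ) :
    Zfun b P n θ * Zfun b P m 1 ≤ Zfun b P (n + m) θ :=
  hP.toReal_measure_mul_Zfun_le (measurableSet_survivalSet_coordSigma θ n)
    fun _ hx => ⟨hx, hx n le_rfl⟩

/-- If `X_1, …, X_s ≥ a`, the chain started at `1` climbs towards the fixed point `A` of
`q ↦ a + q / b` without ever dropping below `1`. -/
lemma pow_mul_Zfun_le (hP : IsProjIID ρ P) (hb : 1 ≤ b) {a A θ' : ℝ} (hA : 1 ≤ A)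
    (haA : a + A / b = A) {s : ℕ} (hθ' : θ' ≤ A + (1 - A) / (b : ℝ) ^ s) (m : ℕ) :
    (ρ (Set.Ici a)).toReal ^ s * Zfun b P m θ' ≤ Zfun b P (s + m) 1 := by
  have hb' : (1 : ℝ) ≤ b := by exact_mod_cast hb
  have hclimb : ∀ x ∈ box a s, ∀ k ≤ s, A + (1 - A) / (b : ℝ) ^ k ≤ Qseq b 1 x k :=
    fun x hx k hk => le_Qseq_of_le haA 1 fun i hi => hx i (Finset.Icc_subset_Icc_right hk hi)
  have hone : ∀ k, 1 ≤ A + (1 - A) / (b : ℝ) ^ k := fun k => by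
    have := div_le_self (sub_nonneg.2 hA) (one_le_pow₀ hb' : 1 ≤ (b : ℝ) ^ k)
    rw [← neg_sub, neg_div]
    linarith
  rw [← ENNReal.toReal_pow, ← hP.measure_box]
  exact hP.toReal_measure_mul_Zfun_le (measurableSet_box a s) fun x hx =>
    ⟨fun k hk => (hone k).trans (hclimb x hx k hk), hθ'.trans (hclimb x hx s le_rfl)⟩

/-- Almost surely `Q_n ≤ θ_b + θ / b ^ n`, and `Q` is monotone in its starting point. -/
lemma Zfun_add_le (hP : IsProjIID ρ P) (hb : 1 < b) (hsupp : ρ (Set.Icc (0 : ℝ) 1)ᶜ = 0)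
    (θ : ℝ) (n m : ℕ) :
    Zfun b P (n + m) θ ≤ Zfun b P n θ * Zfun b P m (thetaB b ρ + θ / (b : ℝ) ^ n) := by
  have := hP.1
  have hsub : survivalSet b θ (n + m) ≤ᵐ[P]
      (survivalSet b θ n ∩ shift n ⁻¹' survivalSet b (thetaB b ρ + θ / (b : ℝ) ^ n) m :
        Set (ℕ → ℝ)) := by
    filter_upwards [hP.ae_le_xStar hsupp] with x hx hmem
    obtain ⟨hn, hshift⟩ := mem_survivalSet_add.1 hmem
    refine ⟨hn, survivalSet_mono ?_ m hshift⟩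
    calc Qseq b θ x n ≤ thetaB b ρ + (θ - thetaB b ρ) / (b : ℝ) ^ n :=
          Qseq_le_of_le (xStar_add_thetaB_div hb) θ fun i _ => hx i
      _ ≤ thetaB b ρ + θ / (b : ℝ) ^ n := by
        gcongr
        linarith [thetaB_nonneg (ρ := ρ) hb]
  rw [Zfun_eq, Zfun_eq, Zfun_eq, ← ENNReal.toReal_mul,
    ← hP.measure_inter_shift_preimage (measurableSet_survivalSet_coordSigma θ n)]
  exact ENNReal.toReal_mono (measure_ne_top _ _) (measure_mono_ae hsub)

/-- Started at `θ_b`, after one step the chain is still at most at `θ_b`, and even below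
`θ_b - γ` unless `X_1 ≥ x_* - γ`. -/
lemma Zfun_succ_thetaB_le (hP : IsProjIID ρ P) (hb : 1 < b)
    (hsupp : ρ (Set.Icc (0 : ℝ) 1)ᶜ = 0) (γ : ℝ) (n : ℕ) :
    Zfun b P (n + 1) (thetaB b ρ) ≤
      (ρ (Set.Ici (xStar ρ - γ))).toReal * Zfun b P n (thetaB b ρ) +
        Zfun b P n (thetaB b ρ - γ) := by
  have := hP.1
  set T := thetaB b ρ
  have hsub : survivalSet b T (1 + n) ≤ᵐ[P]
      ((box (xStar ρ - γ) 1 ∩ shift 1 ⁻¹' survivalSet b T n) ∪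
        shift 1 ⁻¹' survivalSet b (T - γ) n : Set (ℕ → ℝ)) := by
    filter_upwards [hP.ae_le_xStar hsupp] with x hx hmem
    have hshift := (mem_survivalSet_add.1 hmem).2
    have hQ : Qseq b T x 1 = T - (xStar ρ - x 1) := by
      have : Qseq b T x 1 = x 1 + T / b := rfl
      linarith [xStar_add_thetaB_div (ρ := ρ) hb]
    by_cases h : xStar ρ - γ ≤ x 1
    · refine Or.inl ⟨fun i hi => ?_, survivalSet_mono (by linarith [hx 1]) n hshift⟩
      obtain rfl : i = 1 := by simpa using hi
      exact h
    · exact Or.inr (survivalSet_mono (by linarith) n hshift)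
  calc Zfun b P (n + 1) T = (P (survivalSet b T (1 + n))).toReal := by rw [add_comm]; rfl
    _ ≤ (P (box (xStar ρ - γ) 1 ∩ shift 1 ⁻¹' survivalSet b T n) +
          P (shift 1 ⁻¹' survivalSet b (T - γ) n)).toReal :=
      ENNReal.toReal_mono (by finiteness) ((measure_mono_ae hsub).trans (measure_union_le _ _))
    _ = _ := by
      rw [ENNReal.toReal_add (measure_ne_top _ _) (measure_ne_top _ _),
        hP.measure_inter_shift_preimage (measurableSet_box _ 1),
        hP.measure_shift_preimage 1 (measurableSet_survivalSet _ _), hP.measure_box, pow_one,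
        ENNReal.toReal_mul]
      rfl

/-- Iterate `Zfun_add_le` in blocks of length `M`, after a delay `j` chosen by right-continuity
so that each block costs at most `c ^ M`. -/
lemma eventually_rpow_Zfun_lt (hP : IsProjIID ρ P) (hb : 1 < b)
    (hsupp : ρ (Set.Icc (0 : ℝ) 1)ᶜ = 0) {θ c c' : ℝ} (hθ : 0 < θ) (hc0 : 0 < c) (hc1 : c ≤ 1)
    {M : ℕ} (hM : 0 < M) (hZM : Zfun b P M (thetaB b ρ) < c ^ M) (hcc' : c < c') :
    ∀ᶠ N : ℕ in atTop, Zfun b P N θ ^ (1 / (N : ℝ)) < c' := by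
  have := hP.1
  have hb' : (1 : ℝ) < b := by exact_mod_cast hb
  set T := thetaB b ρ
  have hlim : Tendsto (fun j : ℕ => T + θ / (b : ℝ) ^ j) atTop (𝓝[>] T) := by
    refine tendsto_nhdsWithin_iff.2 ⟨?_, .of_forall fun j => ?_⟩
    · simpa using
        (tendsto_const_nhds.div_atTop (tendsto_pow_atTop_atTop_of_one_lt hb')).const_add T
    · exact lt_add_of_pos_right T (by positivity)
  obtain ⟨j, hj⟩ := (((tendsto_Zfun_nhdsGT M T).comp hlim).eventually (gt_mem_nhds hZM)).exists
  have hblock : ∀ k, Zfun b P (j + k * M) θ ≤ c ^ (k * M) := by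
    intro k
    induction k with
    | zero => simpa using Zfun_le_one j θ
    | succ k ih =>
      have hmono : Zfun b P M (T + θ / (b : ℝ) ^ (j + k * M)) ≤
          Zfun b P M (T + θ / (b : ℝ) ^ j) :=
        Zfun_mono (by gcongr; exacts [hb'.le, Nat.le_add_right j _]) M
      calc Zfun b P (j + (k + 1) * M) θ = Zfun b P (j + k * M + M) θ := by ring_nf
        _ ≤ Zfun b P (j + k * M) θ * Zfun b P M (T + θ / (b : ℝ) ^ (j + k * M)) :=
          hP.Zfun_add_le hb hsupp θ _ M
        _ ≤ c ^ (k * M) * c ^ M :=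
          mul_le_mul ih (hmono.trans hj.le) (Zfun_nonneg _ _) (by positivity)
        _ = c ^ ((k + 1) * M) := by ring
  refine eventually_rpow_one_div_lt (Zfun_nonneg · θ) (inv_pos.2 (pow_pos hc0 (j + M))) hc0.le
    hcc' ?_
  filter_upwards [eventually_ge_atTop j] with N hN
  have hle : (N - j) / M * M ≤ N - j := Nat.div_mul_le_self _ _
  have hlt : N - j < (N - j) / M * M + M := Nat.lt_div_mul_add hM
  generalize (N - j) / M = k at hle hlt
  calc Zfun b P N θ ≤ Zfun b P (j + k * M) θ := Zfun_anti θ (by omega)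
    _ ≤ c ^ (k * M) := hblock k
    _ ≤ (c ^ (j + M))⁻¹ * c ^ N := by
      rw [inv_mul_eq_div, le_div_iff₀ (by positivity), ← pow_add]
      exact pow_le_pow_of_le_one hc0.le hc1 (by omega)

/-- Below `θ_b`, survival costs only a bounded factor: a long enough run of values close to `x_*`
lifts the chain from `1` above any level `θ' < θ_b`. -/
lemma exists_Zfun_le_mul_pow (hP : IsProjIID ρ P) (hb : 1 < b)
    (hsupp : ρ (Set.Icc (0 : ℝ) 1)ᶜ = 0) (hT : 1 < thetaB b ρ) {z : ℝ}
    (hz : ∀ n, Zfun b P n 1 ≤ z ^ n) {θ' : ℝ} (hθ' : θ' < thetaB b ρ) :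
    ∃ K, ∀ n, Zfun b P n θ' ≤ K * z ^ n := by
  have := hP.isProbabilityMeasure
  have hb' : (1 : ℝ) < b := by exact_mod_cast hb
  have hxs := xStar_add_thetaB_div (ρ := ρ) hb
  set T := thetaB b ρ
  set A := (max θ' 1 + T) / 2 with hA
  have hA1 : 1 ≤ A := by linarith [le_max_right θ' 1, max_lt hθ' hT]
  have hAθ : θ' < A := by linarith [le_max_left θ' 1, max_lt hθ' hT]
  have hAT : A < T := by linarith [max_lt hθ' hT]
  set a := A - A / b with ha
  have hδ : 0 < xStar ρ - a := by
    have : T / b - A / b < T - A := by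
      rw [← sub_div]
      exact div_lt_self (sub_pos.2 hAT) hb'
    linarith
  have hp : 0 < (ρ (Set.Ici a)).toReal :=
    ENNReal.toReal_pos (by simpa using (measure_Ici_sub_xStar_pos hsupp hδ).ne')
      (measure_ne_top _ _)
  obtain ⟨s, hs⟩ : ∃ s : ℕ, (A - 1) / (b : ℝ) ^ s < A - θ' :=
    ((tendsto_const_nhds.div_atTop (tendsto_pow_atTop_atTop_of_one_lt hb')).eventually
      (gt_mem_nhds (sub_pos.2 hAθ))).exists
  refine ⟨z ^ s / (ρ (Set.Ici a)).toReal ^ s, fun n => ?_⟩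
  have hboost := hP.pow_mul_Zfun_le hb.le hA1 (sub_add_cancel A (A / b)) (θ' := θ') (s := s)
    (by rw [← neg_sub A 1, neg_div]; linarith) n
  rw [div_mul_eq_mul_div, le_div_iff₀ (by positivity), mul_comm, ← pow_add]
  exact hboost.trans (hz _)

lemma eventually_Zfun_thetaB_lt_pow_of_one_lt (hP : IsProjIID ρ P) (hb : 1 < b)
    (hsupp : ρ (Set.Icc (0 : ℝ) 1)ᶜ = 0) (hT : 1 < thetaB b ρ) {z c : ℝ}
    (hz : ∀ n, Zfun b P n 1 ≤ z ^ n) (hzc : z < c) :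
    ∀ᶠ n : ℕ in atTop, Zfun b P n (thetaB b ρ) < c ^ n := by
  have := hP.1
  have := hP.isProbabilityMeasure
  have hb' : (1 : ℝ) < b := by exact_mod_cast hb
  have hxs := xStar_add_thetaB_div (ρ := ρ) hb
  set T := thetaB b ρ
  -- with this `γ`, `X_1 ≥ x_* - γ` is exactly the event `Q_1^{(1)} ≥ 1`, of probability `≤ z`
  set γ := xStar ρ - (1 - 1 / b) with hγ_eq
  have hγ : 0 < γ := by
    have : T / b - 1 / b < T - 1 := by
      rw [← sub_div]
      exact div_lt_self (sub_pos.2 hT) hb'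
    linarith
  set p := (ρ (Set.Ici (xStar ρ - γ))).toReal
  have hp : 0 < p :=
    ENNReal.toReal_pos (measure_Ici_sub_xStar_pos hsupp hγ).ne' (measure_ne_top _ _)
  have hpz : p ≤ z := by
    have h1 := hP.pow_mul_Zfun_le hb.le le_rfl (a := xStar ρ - γ) (by ring) (s := 1) (θ' := 1)
      (by simp) 0
    rw [Zfun_zero le_rfl, pow_one, mul_one] at h1
    simpa using h1.trans (hz 1)
  obtain ⟨K, hK⟩ := hP.exists_Zfun_le_mul_pow hb hsupp hT hz (sub_lt_self T hγ)
  refine eventually_lt_pow_of_le_mul_add (K := K) (hp.trans_le hpz) hzc (Zfun_le_one 0 T)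
    fun n => ?_
  calc Zfun b P (n + 1) T ≤ p * Zfun b P n T + Zfun b P n (T - γ) :=
        hP.Zfun_succ_thetaB_le hb hsupp γ n
    _ ≤ z * Zfun b P n T + K * z ^ n := by
      gcongr
      exacts [Zfun_nonneg n T, hK n]

lemma eventually_Zfun_thetaB_lt_pow (hP : IsProjIID ρ P) (hb : 1 < b)
    (hsupp : ρ (Set.Icc (0 : ℝ) 1)ᶜ = 0) {z c : ℝ}
    (hlim : Tendsto (fun n : ℕ => Zfun b P n 1 ^ (1 / (n : ℝ))) atTop (𝓝 z))
    (hz : ∀ n, Zfun b P n 1 ≤ z ^ n) (hzc : z < c) :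
    ∀ᶠ n : ℕ in atTop, Zfun b P n (thetaB b ρ) < c ^ n := by
  have := hP.1
  rcases le_or_gt (thetaB b ρ) 1 with hT | hT
  · have hc : 0 < c :=
      (ge_of_tendsto' hlim fun n => Real.rpow_nonneg (Zfun_nonneg n 1) _).trans_lt hzc
    filter_upwards [hlim.eventually (gt_mem_nhds hzc), eventually_ge_atTop 1] with n hn hn1
    refine (Zfun_mono hT n).trans_lt ?_
    rwa [one_div, Real.rpow_inv_lt_iff_of_pos (Zfun_nonneg _ _) hc.le (by positivity),
      Real.rpow_natCast] at hn
  · exact hP.eventually_Zfun_thetaB_lt_pow_of_one_lt hb hsupp hT hz hzc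

lemma eventually_rpow_Zfun_lt_of_lt (hP : IsProjIID ρ P) (hb : 1 < b)
    (hsupp : ρ (Set.Icc (0 : ℝ) 1)ᶜ = 0) {z c θ : ℝ}
    (hlim : Tendsto (fun n : ℕ => Zfun b P n 1 ^ (1 / (n : ℝ))) atTop (𝓝 z))
    (hz : ∀ n, Zfun b P n 1 ≤ z ^ n) (hθ : 0 < θ) (hzc : z < c) :
    ∀ᶠ N : ℕ in atTop, Zfun b P N θ ^ (1 / (N : ℝ)) < c := by
  have := hP.1
  have hz0 : 0 ≤ z := ge_of_tendsto' hlim fun n => Real.rpow_nonneg (Zfun_nonneg n 1) _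
  rcases lt_or_ge 1 c with hc1 | hc1
  · exact .of_forall fun N =>
      (Real.rpow_le_one (Zfun_nonneg N θ) (Zfun_le_one N θ) (by positivity)).trans_lt hc1
  obtain ⟨M, hM, hM1⟩ := ((hP.eventually_Zfun_thetaB_lt_pow hb hsupp hlim hz
    (left_lt_add_div_two.2 hzc)).and (eventually_ge_atTop 1)).exists
  exact hP.eventually_rpow_Zfun_lt hb hsupp hθ (by linarith) (by linarith) hM1 hM
    (add_div_two_lt_right.2 hzc)

end IsProjIID

theorem exists_common_root_limit_general
    (b : ℕ) (hb : 2 ≤ b) (ρ : Measure ℝ)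
    (hsupp : ρ ((Set.Icc (0 : ℝ) 1)ᶜ) = 0)
    (P : Measure (ℕ → ℝ)) (hP : IsProjIID ρ P) :
    ∃ z : ℝ, IsZlim b P z := by
  have := hP.1
  obtain ⟨z, hlim, hz⟩ := exists_tendsto_rpow_of_supermultiplicative (Zfun_nonneg · 1)
    (Zfun_le_one · 1) (fun _ _ h => Zfun_anti 1 h) (hP.Zfun_mul_Zfun_one_le · · 1)
  refine ⟨z, fun θ hθ => tendsto_order.2 ⟨fun a ha => ?_, fun c hc =>
    hP.eventually_rpow_Zfun_lt_of_lt hb hsupp hlim hz (by linarith) hc⟩⟩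
  filter_upwards [hlim.eventually (lt_mem_nhds ha)] with n hn
  exact hn.trans_le (Real.rpow_le_rpow (Zfun_nonneg n 1) (Zfun_mono hθ n) (by positivity))

/-- the limit `z(ρ) = lim_n Z_n(θ)^{1/n}` exists and is independent
of `θ ≥ 1`. -/
theorem exists_common_root_limit
    (b : ℕ) (hb : 2 ≤ b) (ρ : Measure ℝ) (hρ : IsProbabilityMeasure ρ)
    (hsupp : ρ ((Set.Icc (0 : ℝ) 1)ᶜ) = 0)
    (P : Measure (ℕ → ℝ)) (hP : IsProjIID ρ P) :
    ∃ z : ℝ, IsZlim b P z :=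
  exists_common_root_limit_general b hb ρ hsupp P hP

end OrgCrit
end

section
/- Let ρ be a Borel probability measure on [0,1] with x_* > 1 - 1/b and ρ((1 - θ_b/b, x_*)) > 0. Then there exists ε > 0 with x_* - ε > (b-1)/b such that z(ρ) > ρ([x_* - ε, x_*]). -/
open MeasureTheory ProbabilityTheory Filter Set
open scoped Classical ENNReal NNReal ENat

namespace OrgCrit

open Topology

/-! If `Q ≥ 1`, an input `≥ c > 1 - 1/b` keeps `Q ≥ 1`, and a run of `m` such inputs pushes `Q`
close to the fixed point `cb/(b-1)` of `Q ↦ c + Q/b`. Taking `c = x_* - η` this fixed point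
exceeds `θ_b - bδ`, so every `m + 1` steps we can afford an input in `[1 - θ_b/b + δ, x_* - δ]`,
an interval of positive mass `p`. With `q = ρ([c, ∞))` this gives
`Z_{k(m+1)}(1) ≥ (q^m (q + p))^k`, hence `z ≥ (q^m (q + p))^{1/(m+1)} > q ≥ ρ([x_* - η, x_*])`. -/

lemma Nat.add_one_mod_of_mod_ne {i m : ℕ} (h : i % (m + 1) ≠ m) :
    (i + 1) % (m + 1) = i % (m + 1) + 1 := by
  have hlt : i % (m + 1) + 1 < m + 1 := by have := Nat.mod_lt i (by omega : 0 < m + 1); omega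
  have hm : m + 1 ≠ 1 := by rintro hm; simp_all
  rw [Nat.add_mod, Nat.one_mod_eq_one.2 hm, Nat.mod_eq_of_lt hlt]

lemma exists_pos_measure_Icc_of_pos_measure_Ioo {μ : Measure ℝ} {a b : ℝ}
    (h : 0 < μ (Ioo a b)) : ∃ δ > 0, 0 < μ (Icc (a + δ) (b - δ)) := by
  by_contra! hcon
  have hcover : Ioo a b ⊆ ⋃ n : ℕ, Icc (a + 1 / ((n : ℝ) + 1)) (b - 1 / ((n : ℝ) + 1)) := by
    rintro y ⟨hay, hyb⟩
    obtain ⟨n, hn⟩ := exists_nat_one_div_lt (lt_min (sub_pos.2 hay) (sub_pos.2 hyb))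
    have := min_le_left (y - a) (b - y)
    have := min_le_right (y - a) (b - y)
    exact mem_iUnion.2 ⟨n, by linarith, by linarith⟩
  have hnull := measure_mono_null hcover <| measure_iUnion_null fun n =>
    nonpos_iff_eq_zero.1 (hcon _ (by positivity))
  exact h.ne' hnull

lemma measure_Ici_sub_pos_of_xStar_pos {ρ : Measure ℝ} (hx : 0 < xStar ρ) {η : ℝ}
    (hη : 0 < η) : 0 < ρ (Ici (xStar ρ - η)) := by
  have hne : {y : ℝ | y ∈ Icc (0 : ℝ) 1 ∧ 0 < ρ (Icc y 1)}.Nonempty := by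
    by_contra hemp
    rw [not_nonempty_iff_eq_empty] at hemp
    simp only [xStar, hemp, Real.sSup_empty, lt_irrefl] at hx
  obtain ⟨y, hy, hlt⟩ := exists_lt_of_lt_csSup hne (sub_lt_self (xStar ρ) hη)
  exact hy.2.trans_le (measure_mono fun t ht => hlt.le.trans ht.1)

lemma toReal_measure_Ici_lt_of_measure_Icc_pos {μ : Measure ℝ} [IsFiniteMeasure μ]
    {lo a c : ℝ} (hac : a < c) (h : 0 < μ (Icc lo a)) :
    (μ (Ici c)).toReal < (μ (Ici lo)).toReal := by
  obtain ⟨y, hy⟩ := nonempty_of_measure_ne_zero h.ne'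
  have hdisj : Disjoint (Ici c) (Icc lo a) :=
    disjoint_left.2 fun t ht ht' => by linarith [mem_Ici.1 ht, ht'.2]
  have hsub : Ici c ∪ Icc lo a ⊆ Ici lo :=
    union_subset (Ici_subset_Ici.2 (by linarith [hy.1, hy.2])) Icc_subset_Ici_self
  refine (ENNReal.toReal_lt_toReal (measure_ne_top _ _) (measure_ne_top _ _)).2 ?_
  calc μ (Ici c) < μ (Ici c) + μ (Icc lo a) := ENNReal.lt_add_right (measure_ne_top _ _) h.ne'
    _ = μ (Ici c ∪ Icc lo a) := (measure_union hdisj measurableSet_Icc).symm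
    _ ≤ μ (Ici lo) := measure_mono hsub

lemma IsProjIID.isProbabilityMeasure_s6 {ρ : Measure ℝ} {P : Measure (ℕ → ℝ)}
    (hP : IsProjIID ρ P) : IsProbabilityMeasure ρ := by
  have := hP.1
  rw [← hP.2.2 0]
  exact Measure.isProbabilityMeasure_map (measurable_pi_apply 0).aemeasurable

lemma IsProjIID.measure_iInter_preimage {ρ : Measure ℝ} {P : Measure (ℕ → ℝ)}
    (hP : IsProjIID ρ P) (s : Finset ℕ) {T : ℕ → Set ℝ} (hT : ∀ i, MeasurableSet (T i)) :
    P (⋂ i ∈ s, (fun x : ℕ → ℝ => x i) ⁻¹' T i) = ∏ i ∈ s, ρ (T i) := by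
  rw [hP.2.1.measure_inter_preimage_eq_mul s fun i _ => hT i]
  refine Finset.prod_congr rfl fun i _ => ?_
  rw [← hP.2.2 i, Measure.map_apply (measurable_pi_apply i) (hT i)]

lemma Finset.prod_Icc_ite_dvd {M : Type*} [CommMonoid M] (a a' : M) (m k : ℕ) :
    ∏ i ∈ Finset.Icc 1 (k * (m + 1)), (if (m + 1) ∣ i then a else a') = a ^ k * a' ^ (k * m) := by
  have hIcc : Finset.Icc 1 (k * (m + 1)) = Finset.Ioc 0 (k * (m + 1)) := rfl
  have hdvd : ((Finset.Icc 1 (k * (m + 1))).filter ((m + 1) ∣ ·)).card = k := by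
    rw [hIcc, Nat.Ioc_filter_dvd_card_eq_div, Nat.mul_div_cancel _ m.succ_pos]
  have hndvd : ((Finset.Icc 1 (k * (m + 1))).filter (¬ (m + 1) ∣ ·)).card = k * m := by
    rw [Finset.filter_not, Finset.card_sdiff_of_subset (Finset.filter_subset _ _), hdvd,
      Nat.card_Icc, Nat.mul_succ]
    omega
  rw [Finset.prod_ite, Finset.prod_const, Finset.prod_const, hdvd, hndvd]

section Qseq

variable {b : ℕ}

lemma Qseq_const_eq (hb : 1 < (b : ℝ)) (θ c : ℝ) (r : ℕ) :
    Qseq b θ (fun _ => c) r = c * b / (b - 1) + (θ - c * b / (b - 1)) / (b : ℝ) ^ r := by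
  have hb0 : (b : ℝ) ≠ 0 := by positivity
  have hb1 : (b : ℝ) - 1 ≠ 0 := by linarith
  induction r with
  | zero => simp [Qseq]
  | succ r ih =>
    rw [Qseq, ih]
    field_simp
    ring

lemma tendsto_Qseq_const (hb : 1 < (b : ℝ)) (θ c : ℝ) :
    Tendsto (Qseq b θ fun _ => c) atTop (𝓝 (c * b / (b - 1))) := by
  have h := tendsto_const_nhds (x := c * b / (b - 1)) |>.add <|
    (tendsto_const_nhds (x := θ - c * b / (b - 1))).div_atTop (tendsto_pow_atTop_atTop_of_one_lt hb)
  rw [add_zero] at h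
  exact h.congr fun r => (Qseq_const_eq hb θ c r).symm

lemma one_le_Qseq_const (hb : 0 < b) {c : ℝ} (hc : 1 ≤ c + 1 / b) (r : ℕ) :
    1 ≤ Qseq b 1 (fun _ => c) r := by
  induction r with
  | zero => exact le_rfl
  | succ r ih =>
    have : 1 / (b : ℝ) ≤ Qseq b 1 (fun _ => c) r / b := by gcongr
    show 1 ≤ c + _
    linarith

lemma one_le_Qseq_of_blocks (hb : 0 < b) {c lo : ℝ} {m n : ℕ} (hc : 1 ≤ c + 1 / b)
    (hlo : 1 ≤ lo + Qseq b 1 (fun _ => c) m / b) {x : ℕ → ℝ}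
    (hx : ∀ i ∈ Finset.Icc 1 n, x i ∈ if (m + 1) ∣ i then Ici lo else Ici c) :
    ∀ k ≤ n, 1 ≤ Qseq b 1 x k := by
  set u := Qseq b 1 fun _ => c
  -- `Q` is at least `1` at every multiple of `m + 1` and then dominates the orbit `u` of
  -- `Q ↦ c + Q / b` started at `1`.
  have key : ∀ i ≤ n, u (i % (m + 1)) ≤ Qseq b 1 x i := by
    intro i
    induction i with
    | zero => exact fun _ => le_rfl
    | succ i ih =>
      intro hi
      have hQ : u (i % (m + 1)) / b ≤ Qseq b 1 x i / b := by gcongr; exact ih (by omega)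
      have hxi := hx (i + 1) (Finset.mem_Icc.2 ⟨by omega, hi⟩)
      show _ ≤ x (i + 1) + Qseq b 1 x i / b
      split_ifs at hxi with hdvd
      · have hmod := Nat.mod_eq_zero_of_dvd hdvd
        rw [Nat.succ_mod_succ_eq_zero_iff.1 hmod] at hQ
        rw [hmod]
        have hu0 : u 0 = 1 := rfl
        linarith [mem_Ici.1 hxi]
      · have hne : i % (m + 1) ≠ m := fun h =>
          hdvd (Nat.dvd_of_mod_eq_zero (Nat.succ_mod_succ_eq_zero_iff.2 h))
        rw [Nat.add_one_mod_of_mod_ne hne]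
        show c + _ ≤ _
        linarith [mem_Ici.1 hxi]
  exact fun k hk => (one_le_Qseq_const hb hc _).trans (key k hk)

lemma pow_le_Zfun_of_blocks {ρ : Measure ℝ} {P : Measure (ℕ → ℝ)} (hP : IsProjIID ρ P)
    (hb : 0 < b) {c lo : ℝ} {m : ℕ} (hc : 1 ≤ c + 1 / b)
    (hlo : 1 ≤ lo + Qseq b 1 (fun _ => c) m / b) (k : ℕ) :
    ((ρ (Ici c)).toReal ^ m * (ρ (Ici lo)).toReal) ^ k ≤ Zfun b P (k * (m + 1)) 1 := by
  have := hP.1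
  set T : ℕ → Set ℝ := fun i => if (m + 1) ∣ i then Ici lo else Ici c
  have hT : ∀ i, MeasurableSet (T i) := fun i => by
    dsimp only [T]; split_ifs <;> exact measurableSet_Ici
  have hE := hP.measure_iInter_preimage (Finset.Icc 1 (k * (m + 1))) hT
  have hρT : ∀ i, ρ (T i) = if (m + 1) ∣ i then ρ (Ici lo) else ρ (Ici c) := fun i => by
    dsimp only [T]; split_ifs <;> rfl
  simp only [hρT, Finset.prod_Icc_ite_dvd] at hE
  calc ((ρ (Ici c)).toReal ^ m * (ρ (Ici lo)).toReal) ^ k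
      = (P (⋂ i ∈ Finset.Icc 1 (k * (m + 1)), (fun x : ℕ → ℝ => x i) ⁻¹' T i)).toReal := by
        rw [hE, ENNReal.toReal_mul, ENNReal.toReal_pow, ENNReal.toReal_pow, mul_pow, ← pow_mul,
          mul_comm, mul_comm m k]
    _ ≤ Zfun b P (k * (m + 1)) 1 := ENNReal.toReal_mono (measure_ne_top _ _) <|
        measure_mono fun x hx => one_le_Qseq_of_blocks hb hc hlo fun i hi => by
          simpa using mem_iInter₂.1 hx i hi

lemma exists_one_le_add_Qseq_const (hb : 2 ≤ b) (ρ : Measure ℝ) {δ η : ℝ} (hη : 0 < η)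
    (hηδ : η < δ) :
    ∃ m, 1 ≤ 1 - thetaB b ρ / b + δ + Qseq b 1 (fun _ => xStar ρ - η) m / b := by
  have hb2 : (2 : ℝ) ≤ b := by exact_mod_cast hb
  have hfix : thetaB b ρ - b * δ < (xStar ρ - η) * b / (b - 1) := by
    have hcb : (xStar ρ - η) * b / (b - 1) = thetaB b ρ - η * b / (b - 1) := by
      unfold thetaB; field_simp
    have : η * b / (b - 1) ≤ η * b := div_le_self (by positivity) (by linarith)
    have : η * b < δ * b := by gcongr
    linarith
  obtain ⟨m, hm⟩ :=
    ((tendsto_Qseq_const (by linarith) 1 (xStar ρ - η)).eventually (lt_mem_nhds hfix)).exists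
  refine ⟨m, ?_⟩
  have : (thetaB b ρ - b * δ) / b < Qseq b 1 (fun _ => xStar ρ - η) m / b := by gcongr
  have : (thetaB b ρ - b * δ) / b = thetaB b ρ / b - δ := by field_simp
  linarith

end Qseq

lemma rpow_one_div_le_of_tendsto {Z : ℕ → ℝ} {z A : ℝ} (hA : 0 ≤ A) {N : ℕ} (hN : 0 < N)
    (hZ : Tendsto (fun n : ℕ => Z n ^ (1 / (n : ℝ))) atTop (𝓝 z))
    (h : ∀ k, A ^ k ≤ Z (k * N)) : A ^ (1 / (N : ℝ)) ≤ z := by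
  have hsub : Tendsto (· * N) atTop atTop :=
    tendsto_atTop_mono (fun k => Nat.le_mul_of_pos_right k hN) tendsto_id
  refine ge_of_tendsto (hZ.comp hsub) ?_
  filter_upwards [eventually_gt_atTop 0] with k hk
  calc A ^ (1 / (N : ℝ)) = (A ^ k) ^ (1 / ((k * N : ℕ) : ℝ)) := by
        rw [← Real.rpow_natCast, ← Real.rpow_mul hA]
        congr 1
        push_cast
        field_simp
    _ ≤ Z (k * N) ^ (1 / ((k * N : ℕ) : ℝ)) :=
        Real.rpow_le_rpow (by positivity) (h k) (by positivity)

lemma lt_pow_mul_rpow_one_div {q q' : ℝ} (hq : 0 < q) (hqq' : q < q') (m : ℕ) :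
    q < (q ^ m * q') ^ (1 / ((m + 1 : ℕ) : ℝ)) := by
  have hpos : 0 < q ^ m * q' := mul_pos (pow_pos hq m) (hq.trans hqq')
  rw [one_div, Real.lt_rpow_inv_iff_of_pos hq.le hpos.le (by positivity), Real.rpow_natCast,
    pow_succ]
  gcongr

theorem z_gt_mass_near_xStar_general
    (b : ℕ) (hb : 2 ≤ b) (ρ : Measure ℝ)
    (hx : 1 - 1 / (b : ℝ) < xStar ρ)
    (hmass : 0 < ρ (Set.Ioo (1 - thetaB b ρ / (b : ℝ)) (xStar ρ)))
    (P : Measure (ℕ → ℝ)) (hP : IsProjIID ρ P)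
    (z : ℝ) (hz : IsZlim b P z) :
    ∃ ε : ℝ, 0 < ε ∧ ((b : ℝ) - 1) / (b : ℝ) < xStar ρ - ε ∧
      (ρ (Set.Icc (xStar ρ - ε) (xStar ρ))).toReal < z := by
  have := hP.isProbabilityMeasure_s6
  obtain ⟨δ, hδ, hL⟩ := exists_pos_measure_Icc_of_pos_measure_Ioo hmass
  obtain ⟨η, hη, hηδ, hηx⟩ : ∃ η, 0 < η ∧ η < δ ∧ η < xStar ρ - (1 - 1 / b) := by
    obtain ⟨η, hη, hηmin⟩ := exists_between (lt_min hδ (sub_pos.2 hx))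
    exact ⟨η, hη, hηmin.trans_le (min_le_left _ _), hηmin.trans_le (min_le_right _ _)⟩
  obtain ⟨m, hm⟩ := exists_one_le_add_Qseq_const hb ρ hη hηδ
  have hx0 : 0 < xStar ρ := lt_trans (sub_pos.2 <| (div_lt_one (by positivity)).2 <| by
    exact_mod_cast hb) hx
  set q := (ρ (Ici (xStar ρ - η))).toReal
  have hq : 0 < q :=
    ENNReal.toReal_pos (measure_Ici_sub_pos_of_xStar_pos hx0 hη).ne' (measure_ne_top _ _)
  have hqlo := toReal_measure_Ici_lt_of_measure_Icc_pos (c := xStar ρ - η) (by linarith) hL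
  have hzq := rpow_one_div_le_of_tendsto (by positivity) m.succ_pos (hz 1 le_rfl)
    (pow_le_Zfun_of_blocks hP (by omega) (by linarith) hm)
  refine ⟨η, hη, by rw [sub_div, div_self (by positivity)]; linarith, ?_⟩
  calc (ρ (Icc (xStar ρ - η) (xStar ρ))).toReal ≤ q :=
        ENNReal.toReal_mono (measure_ne_top _ _) (measure_mono Icc_subset_Ici_self)
    _ < _ := lt_pow_mul_rpow_one_div hq hqlo m
    _ ≤ z := hzq

/-- if `x_* > 1 - 1/b` and `ρ((1 - θ_b/b, x_*)) > 0`, then there is `ε > 0`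
with `x_* - ε > (b-1)/b` and `z(ρ) > ρ([x_* - ε, x_*])`. -/
theorem z_gt_mass_near_xStar
    (b : ℕ) (hb : 2 ≤ b) (ρ : Measure ℝ) (hρ : IsProbabilityMeasure ρ)
    (hsupp : ρ ((Set.Icc (0 : ℝ) 1)ᶜ) = 0)
    (hx : 1 - 1 / (b : ℝ) < xStar ρ)
    (hmass : 0 < ρ (Set.Ioo (1 - thetaB b ρ / (b : ℝ)) (xStar ρ)))
    (P : Measure (ℕ → ℝ)) (hP : IsProjIID ρ P)
    (z : ℝ) (hz : IsZlim b P z) :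
    ∃ ε : ℝ, 0 < ε ∧ ((b : ℝ) - 1) / (b : ℝ) < xStar ρ - ε ∧
      (ρ (Set.Icc (xStar ρ - ε) (xStar ρ))).toReal < z :=
  z_gt_mass_near_xStar_general b hb ρ hx hmass P hP z hz

end OrgCrit
end

section
/- Let ρ ∈ M♭. Then the law of Q_∞ under P̂ has no atom at 1: P̂(Q_∞ = 1) = 0. -/
open MeasureTheory ProbabilityTheory Filter Set
open scoped Classical ENNReal NNReal ENat

namespace ProbabilityTheory

variable {Ω β : Type*} [MeasurableSpace Ω] [MeasurableSpace β] {μ : Measure Ω}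

theorem IndepFun.measure_inter_add_mem_Icc_le [IsFiniteMeasure μ] {W : Ω → β} {X : Ω → ℝ}
    (hW : Measurable W) (hX : Measurable X) (hWX : IndepFun W X μ)
    {C : ℝ≥0} (hC : ∀ s, μ.map X s ≤ C * volume s)
    {E : Set β} (hE : MeasurableSet E) {R : β → ℝ} (hR : Measurable R) (a c : ℝ) :
    μ (W ⁻¹' E ∩ {ω | X ω + R (W ω) ∈ Icc a c}) ≤ C * ENNReal.ofReal (c - a) * μ (W ⁻¹' E) := by
  set G : Set (β × ℝ) := {p | p.1 ∈ E ∧ p.2 + R p.1 ∈ Icc a c}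
  have hG : MeasurableSet G :=
    (measurable_fst hE).inter ((measurable_snd.add (hR.comp measurable_fst)) measurableSet_Icc)
  have hslice :
      ∀ z, μ.map X (Prod.mk z ⁻¹' G) ≤ E.indicator (fun _ => C * ENNReal.ofReal (c - a)) z := by
    intro z
    by_cases hz : z ∈ E
    · have : Prod.mk z ⁻¹' G = (· + R z) ⁻¹' Icc a c := by ext x; exact and_iff_right hz
      rw [indicator_of_mem hz, this]
      calc μ.map X ((· + R z) ⁻¹' Icc a c) ≤ C * volume ((· + R z) ⁻¹' Icc a c) := hC _
        _ = C * ENNReal.ofReal (c - a) := by rw [measure_preimage_add_right, Real.volume_Icc]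
    · have : Prod.mk z ⁻¹' G = ∅ := by ext x; simp [G, hz]
      simp [this, hz]
  calc μ (W ⁻¹' E ∩ {ω | X ω + R (W ω) ∈ Icc a c})
      = μ.map (fun ω => (W ω, X ω)) G := by rw [Measure.map_apply (hW.prodMk hX) hG]; rfl
    _ = ∫⁻ z, μ.map X (Prod.mk z ⁻¹' G) ∂μ.map W := by
      rw [(indepFun_iff_map_prod_eq_prod_map_map hW.aemeasurable hX.aemeasurable).1 hWX,
        Measure.prod_apply hG]
    _ ≤ ∫⁻ z, E.indicator (fun _ => C * ENNReal.ofReal (c - a)) z ∂μ.map W :=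
      lintegral_mono hslice
    _ = C * ENNReal.ofReal (c - a) * μ (W ⁻¹' E) := by
      rw [lintegral_indicator_const hE, Measure.map_apply hW hE]

theorem cond_apply_le_of_measure_inter_le [IsFiniteMeasure μ] {s t : Set Ω}
    (hs : MeasurableSet s) {c : ℝ≥0∞} (h : μ (s ∩ t) ≤ c * μ s) : μ[t|s] ≤ c := by
  rw [cond_apply hs]
  rcases eq_or_ne (μ s) 0 with h0 | h0
  · simp [measure_mono_null inter_subset_left h0]
  · rwa [ENNReal.inv_mul_le_iff h0 (measure_ne_top μ s), mul_comm]

end ProbabilityTheory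

namespace OrgCrit

section Truncate

variable {ι : Type*}

noncomputable def truncate (J : Finset ι) (y : ι → ℝ) : ι → ℝ :=
  fun i => if i ∈ J then y i else 0

theorem truncate_of_mem {J : Finset ι} {i : ι} (h : i ∈ J) (y : ι → ℝ) : truncate J y i = y i :=
  if_pos h

theorem measurable_truncate (J : Finset ι) : Measurable (truncate J) :=
  measurable_pi_lambda _ fun i => by
    by_cases h : i ∈ J <;> simp [truncate, h, measurable_pi_apply]

theorem indepFun_truncate_apply {μ : Measure (ι → ℝ)}
    (h : iIndepFun (fun i (y : ι → ℝ) => y i) μ) {J : Finset ι} {i : ι} (hi : i ∉ J) :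
    IndepFun (truncate J) (fun y => y i) μ := by
  have hJi := h.indepFun_finset J {i} (Finset.disjoint_singleton_right.2 hi) measurable_pi_apply
  have hext : Measurable fun (z : J → ℝ) (j : ι) => if hj : j ∈ J then z ⟨j, hj⟩ else 0 :=
    measurable_pi_lambda _ fun j => by
      by_cases hj : j ∈ J <;> simp [hj, measurable_pi_apply]
  convert hJi.comp hext (measurable_pi_apply ⟨i, Finset.mem_singleton_self i⟩) using 1
  · ext y j
    by_cases hj : j ∈ J <;> simp [truncate, hj]
  · rfl

end Truncate

section Qnk

theorem measurable_Qnk (b : ℕ) (θ : ℝ) (n k : ℕ) : Measurable fun y => Qnk b θ y n k :=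
  (Finset.measurable_sum _ fun j _ => (measurable_pi_apply (k + j)).div_const _).add_const _

theorem Qnk_congr {b : ℕ} {θ : ℝ} {y y' : ℕ → ℝ} {n k : ℕ} (hkn : k ≤ n)
    (h : ∀ i, k ≤ i → i ≤ n → y i = y' i) : Qnk b θ y n k = Qnk b θ y' n k := by
  unfold Qnk
  congr 1
  refine Finset.sum_congr rfl fun j hj => ?_
  rw [h (k + j) (by omega) (by rw [Finset.mem_range] at hj; omega)]

theorem Qnk_eq_add_Qnk_succ_div (b : ℕ) (θ : ℝ) (y : ℕ → ℝ) {n k : ℕ} (hkn : k < n) :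
    Qnk b θ y n k = y k + Qnk b θ y n (k + 1) / b := by
  obtain ⟨m, hm, hm'⟩ : ∃ m, n - k = m + 1 ∧ n - (k + 1) = m := ⟨n - k - 1, by omega, by omega⟩
  have hterm : ∀ j, y (k + (j + 1)) / (b : ℝ) ^ (j + 1) = y (k + 1 + j) / (b : ℝ) ^ j / b :=
    fun j => by rw [pow_succ, div_div, add_comm j 1, add_assoc]
  rw [Qnk, Qnk, hm, hm', Finset.sum_range_succ', add_div, Finset.sum_div]
  simp only [hterm, pow_succ _ (m + 1), ← div_div, add_zero, pow_zero, div_one]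
  ring

theorem Qnk_zero_one (b : ℕ) (y : ℕ → ℝ) {k : ℕ} (hk : 1 ≤ k) :
    Qnk b 0 y k 1 = ∑ j ∈ Finset.range k, y (j + 1) / (b : ℝ) ^ j := by
  simp only [Qnk, zero_div, add_zero, Nat.sub_add_cancel hk, add_comm 1]

theorem Qinf_mem_Icc {b : ℕ} (hb : 2 ≤ b) {y : ℕ → ℝ} (hy : ∀ j, y (j + 1) ∈ Icc (0 : ℝ) 1)
    (k : ℕ) :
    Qinf b y ∈ Icc (∑ j ∈ Finset.range k, y (j + 1) / (b : ℝ) ^ j)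
      (∑ j ∈ Finset.range k, y (j + 1) / (b : ℝ) ^ j + 2 / (b : ℝ) ^ k) := by
  have hb' : (2 : ℝ) ≤ b := by exact_mod_cast hb
  have hr0 : (0 : ℝ) ≤ (b : ℝ)⁻¹ := by positivity
  have hr1 : (b : ℝ)⁻¹ < 1 := inv_lt_one_of_one_lt₀ (by linarith)
  set f : ℕ → ℝ := fun j => y (j + 1) / (b : ℝ) ^ j
  have hf : ∀ j, f j ∈ Icc 0 ((b : ℝ)⁻¹ ^ j) := fun j => by
    rw [inv_pow, ← one_div]
    exact ⟨div_nonneg (hy j).1 (by positivity),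
      div_le_div_of_nonneg_right (hy j).2 (by positivity)⟩
  have hgeo := summable_geometric_of_lt_one hr0 hr1
  have hsum : Summable f := hgeo.of_nonneg_of_le (fun j => (hf j).1) (fun j => (hf j).2)
  have htail : ∑' j, f (j + k) ≤ 2 / (b : ℝ) ^ k :=
    calc ∑' j, f (j + k) ≤ ∑' j, (b : ℝ)⁻¹ ^ (j + k) :=
          Summable.tsum_le_tsum (fun j => (hf _).2) ((summable_nat_add_iff k).2 hsum)
            ((summable_nat_add_iff k).2 hgeo)
      _ = (1 - (b : ℝ)⁻¹)⁻¹ * (b : ℝ)⁻¹ ^ k := by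
          simp only [pow_add]
          rw [tsum_mul_right, tsum_geometric_of_lt_one hr0 hr1]
      _ ≤ 2 / (b : ℝ) ^ k := by
          rw [div_eq_mul_inv, inv_pow]
          gcongr
          rw [inv_le_comm₀ (by linarith) (by norm_num)]
          linarith [inv_anti₀ (by norm_num : (0 : ℝ) < 2) hb']
  rw [Qinf, ← hsum.sum_add_tsum_nat_add k]
  exact ⟨le_add_of_nonneg_right (tsum_nonneg fun j => (hf _).1), by gcongr⟩

end Qnk

section Cylinder

variable {b : ℕ} {P Phat : Measure (ℕ → ℝ)}

theorem IsLawQhat.measure_le_of_forall_PnTheta_le (hPhat : IsLawQhat b P Phat) {k : ℕ}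
    {A : Set (ℕ → ℝ)} (hA : MeasurableSet A)
    (hdep : ∀ y y' : ℕ → ℝ, (∀ i, 1 ≤ i → i ≤ k → y i = y' i) → (y ∈ A ↔ y' ∈ A))
    {c : ℝ≥0∞} (hc : c ≠ ∞) (hle : ∀ n, PnTheta b P n 1 A ≤ c) : Phat A ≤ c := by
  have := hPhat.1
  have hlim := hPhat.2 1 le_rfl k (A.indicator 1) (measurable_const.indicator hA)
    ⟨1, fun y => by by_cases hy : y ∈ A <;> simp [hy]⟩
    (fun y y' h => by simp only [indicator_apply, Pi.one_apply, hdep y y' h])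
  simp only [integral_indicator_one hA] at hlim
  have hreal : Phat.real A ≤ c.toReal :=
    le_of_tendsto' hlim fun n => ENNReal.toReal_mono hc (hle n)
  exact (ENNReal.toReal_le_toReal (measure_ne_top _ _) hc).1 hreal

theorem IsLawQhat.ae_mem_Icc (hPhat : IsLawQhat b P Phat) {ρ : Measure ℝ} (hP : IsProjIID ρ P)
    (hρ : ρ (Icc 0 1)ᶜ = 0) : ∀ᵐ y ∂Phat, ∀ j, y (j + 1) ∈ Icc (0 : ℝ) 1 := by
  refine ae_all_iff.2 fun j => ?_
  have hA : MeasurableSet {y : ℕ → ℝ | y (j + 1) ∈ (Icc 0 1)ᶜ} :=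
    measurable_pi_apply _ measurableSet_Icc.compl
  have hnull : P {y : ℕ → ℝ | y (j + 1) ∈ (Icc 0 1)ᶜ} = 0 := by
    rw [← hρ, ← hP.2.2 (j + 1), Measure.map_apply (measurable_pi_apply _) measurableSet_Icc.compl]
    rfl
  exact nonpos_iff_eq_zero.1 <| hPhat.measure_le_of_forall_PnTheta_le (k := j + 1) hA
    (fun y y' h => by rw [mem_ofPred_eq, mem_ofPred_eq, h (j + 1) (by omega) le_rfl])
    ENNReal.zero_ne_top fun n => (cond_absolutelyContinuous hnull).le

theorem PnTheta_Qnk_mem_Icc_le {ρ : Measure ℝ} (hP : IsProjIID ρ P) {C : ℝ≥0}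
    (hC : ∀ s, ρ s ≤ C * volume s) (n : ℕ) (θ : ℝ) {k : ℕ} (hk : 2 ≤ k) (a c : ℝ) :
    PnTheta b P n θ {y | Qnk b 0 y k 1 ∈ Icc a c} ≤ C * ENNReal.ofReal (c - a) := by
  obtain ⟨hprob, hind, hlaw⟩ := hP
  set S : Set (ℕ → ℝ) := {y | ∀ ℓ, 2 ≤ ℓ → ℓ ≤ n → 1 ≤ Qnk b θ y n ℓ}
  -- `truncate J` keeps every coordinate seen by `S` and by `Q_{k,2}^{(0)}`, and forgets `Y_1`.
  set J := Finset.Icc 2 (max n k)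
  have hJ : ∀ y i, 2 ≤ i → i ≤ max n k → truncate J y i = y i := fun y i h2 hN =>
    truncate_of_mem (Finset.mem_Icc.2 ⟨h2, hN⟩) y
  have hS : MeasurableSet S := by
    simp only [S, ofPred_forall]
    exact .iInter fun ℓ => .iInter fun _ => .iInter fun _ =>
      measurableSet_le measurable_const (measurable_Qnk b θ n ℓ)
  have hSJ : truncate J ⁻¹' S = S := by
    ext y
    refine forall_congr' fun ℓ => forall_congr' fun h2 => forall_congr' fun hn => ?_
    rw [Qnk_congr hn fun i hi hin => hJ y i (h2.trans hi) (hin.trans (le_max_left n k))]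
  have hsplit : ∀ y, Qnk b 0 y k 1 = y 1 + Qnk b 0 (truncate J y) k 2 / b := fun y => by
    rw [Qnk_eq_add_Qnk_succ_div b 0 y (by omega : 1 < k),
      Qnk_congr hk fun i hi hik => (hJ y i hi (hik.trans (le_max_right n k))).symm]
  have hlaw1 : ∀ s, P.map (fun y => y 1) s ≤ C * volume s := by rw [hlaw 1]; exact hC
  have key := (indepFun_truncate_apply hind (J := J) (i := 1) (by simp [J])
    ).measure_inter_add_mem_Icc_le (measurable_truncate J) (measurable_pi_apply 1) hlaw1 hS
      ((measurable_Qnk b 0 k 2).div_const (b : ℝ)) a c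
  rw [hSJ] at key
  unfold PnTheta
  refine cond_apply_le_of_measure_inter_le hS ?_
  convert key using 3
  ext y
  simp only [mem_ofPred_eq, hsplit]

theorem IsLawQhat.measure_Qnk_mem_Icc_le (hPhat : IsLawQhat b P Phat) {ρ : Measure ℝ}
    (hP : IsProjIID ρ P) {C : ℝ≥0} (hC : ∀ s, ρ s ≤ C * volume s) {k : ℕ} (hk : 2 ≤ k)
    (a c : ℝ) : Phat {y | Qnk b 0 y k 1 ∈ Icc a c} ≤ C * ENNReal.ofReal (c - a) :=
  hPhat.measure_le_of_forall_PnTheta_le (k := k) (measurable_Qnk b 0 k 1 measurableSet_Icc)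
    (fun y y' h => by rw [mem_preimage, mem_preimage, Qnk_congr (by omega) h])
    (ENNReal.mul_ne_top ENNReal.coe_ne_top ENNReal.ofReal_ne_top)
    fun n => PnTheta_Qnk_mem_Icc_le hP hC n 1 hk a c

end Cylinder

/-- the law of `Q_∞` under `P̂` has no atom at `1`. -/
theorem Qinf_no_atom_at_one
    (b : ℕ) (hb : 2 ≤ b) (ρ : Measure ℝ) (hρ : MFlat b ρ)
    (P : Measure (ℕ → ℝ)) (hP : IsProjIID ρ P)
    (Phat : Measure (ℕ → ℝ)) (hPhat : IsLawQhat b P Phat) :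
    Phat {y | Qinf b y = 1} = 0 := by
  obtain ⟨-, hsupp, ⟨C, hC⟩, -⟩ := hρ
  have hbound : ∀ k ≥ 2, Phat {y | Qinf b y = 1} ≤ C * ENNReal.ofReal (2 / (b : ℝ) ^ k) := by
    intro k hk
    calc Phat {y | Qinf b y = 1} ≤ Phat {y | Qnk b 0 y k 1 ∈ Icc (1 - 2 / (b : ℝ) ^ k) 1} := by
          refine measure_mono_ae ((hPhat.ae_mem_Icc hP hsupp).mono fun y hy hQ => ?_)
          have hQ' := Qinf_mem_Icc hb hy k
          rw [hQ, ← Qnk_zero_one b y (by omega)] at hQ'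
          exact ⟨by linarith [hQ'.2], hQ'.1⟩
      _ ≤ C * ENNReal.ofReal (2 / (b : ℝ) ^ k) := by
          simpa using hPhat.measure_Qnk_mem_Icc_le hP hC hk (1 - 2 / (b : ℝ) ^ k) 1
  have hlim :
      Tendsto (fun k : ℕ => (C : ℝ≥0∞) * ENNReal.ofReal (2 / (b : ℝ) ^ k)) atTop (nhds 0) := by
    have hb1 : (1 : ℝ) < b := by exact_mod_cast hb
    have h := (tendsto_pow_atTop_nhds_zero_of_lt_one (by positivity)
      (inv_lt_one_of_one_lt₀ hb1)).const_mul 2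
    simpa [div_eq_mul_inv] using
      ENNReal.Tendsto.const_mul (ENNReal.tendsto_ofReal h) (Or.inr ENNReal.coe_ne_top)
  exact le_antisymm (ge_of_tendsto hlim (eventually_atTop.2 ⟨2, hbound⟩)) bot_le

end OrgCrit
end
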